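/- Let F : ℝⁿ → ℝ be continuously differentiable, g ∈ O(n) an orthogonal matrix, v ∈ ℝⁿ with ‖v‖₂ = 1, and x, x' ∈ ℝⁿ. Then IG_v(gx, gx', g·F) = IG_{gᵀv}(x, x', F). -/

import Mathlib

open scoped RealInnerProductSpace

/-- The action of an `n × n` matrix on Euclidean space `ℝⁿ`. -/
noncomputable def matVec {n : ℕ} (g : Matrix (Fin n) (Fin n) ℝ)
    (x : EuclideanSpace ℝ (Fin n)) : EuclideanSpace ℝ (Fin n) := WithLp.toLp 2 (g.mulVec x)

/-- The component in direction `v` of integrated gradients along the straight-line path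
from `x'` to `x`: `IG_v(x, x', F) = ∫₀¹ ⟨∇F(γ(t)), v⟩ ⟨x − x', v⟩ dt`. -/
noncomputable def IGv {n : ℕ} (x x' : EuclideanSpace ℝ (Fin n))
    (F : EuclideanSpace ℝ (Fin n) → ℝ) (v : EuclideanSpace ℝ (Fin n)) : ℝ :=
  ∫ t in (0:ℝ)..1, ⟪gradient F (x' + t • (x - x')), v⟫ * ⟪x - x', v⟫

/-- `matVec g` as a continuous linear map. -/
noncomputable def matVecCLM {n : ℕ} (g : Matrix (Fin n) (Fin n) ℝ) :
    EuclideanSpace ℝ (Fin n) →L[ℝ] EuclideanSpace ℝ (Fin n) :=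
  LinearMap.toContinuousLinearMap
    { toFun := matVec g
      map_add' := fun a b => by
        simp [matVec, Matrix.mulVec_add, PiLp.add_apply, mul_add,
          Finset.sum_add_distrib]
      map_smul' := fun c a => by
        simp [matVec, Matrix.mulVec_smul, PiLp.smul_apply, smul_eq_mul,
          Finset.mul_sum, mul_left_comm] }

lemma matVecCLM_apply {n : ℕ} (g : Matrix (Fin n) (Fin n) ℝ) (x : EuclideanSpace ℝ (Fin n)) :
    matVecCLM g x = matVec g x := rfl

lemma matVec_adj {n : ℕ} (g : Matrix (Fin n) (Fin n) ℝ)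
    (a b : EuclideanSpace ℝ (Fin n)) : ⟪matVec g a, b⟫ = ⟪a, matVec g.transpose b⟫ := by
  simp only [matVec, PiLp.inner_apply, RCLike.inner_apply, conj_trivial, PiLp.toLp_apply]
  have h1 : ∑ i, g.mulVec a i * b i = dotProduct (WithLp.equiv 2 _ b) (g.mulVec a) := by
    simp [dotProduct, mul_comm]
  have h2 : ∑ i, a i * g.transpose.mulVec b i
      = dotProduct (WithLp.equiv 2 _ a) (g.transpose.mulVec b) := rfl
  rw [Matrix.mulVec_transpose]; exact Matrix.dotProduct_mulVec b.ofLp g a.ofLp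

lemma matVec_sub {n : ℕ} (g : Matrix (Fin n) (Fin n) ℝ) (a b : EuclideanSpace ℝ (Fin n)) :
    matVec g a - matVec g b = matVec g (a - b) := by
  rw [← matVecCLM_apply, ← matVecCLM_apply, ← matVecCLM_apply, map_sub]

lemma matVec_matVec {n : ℕ} (g h : Matrix (Fin n) (Fin n) ℝ) (a : EuclideanSpace ℝ (Fin n)) :
    matVec g (matVec h a) = matVec (g * h) a := by
  simp [matVec, Matrix.mulVec_mulVec]

lemma matVec_one {n : ℕ} (a : EuclideanSpace ℝ (Fin n)) : matVec 1 a = a := by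
  simp [matVec]

lemma gradient_comp {n : ℕ} (F : EuclideanSpace ℝ (Fin n) → ℝ) (hF : ContDiff ℝ 1 F)
    (g : Matrix (Fin n) (Fin n) ℝ) (hg : g ∈ Matrix.orthogonalGroup (Fin n) ℝ)
    (w : EuclideanSpace ℝ (Fin n)) :
    gradient (fun z => F (matVec g.transpose z)) (matVec g w) = matVec g (gradient F w) := by
  have hgt : g.transpose * g = 1 := by
    have := (Matrix.mem_orthogonalGroup_iff' (Fin n) ℝ).mp hg
    simpa [Matrix.star_eq_conjTranspose] using this
  have hdF : HasGradientAt F (gradient F w) w :=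
    ((hF.differentiable one_ne_zero) w).hasGradientAt
  have hfd : HasFDerivAt F ((InnerProductSpace.toDual ℝ _) (gradient F w)) w := hdF.hasFDerivAt
  have hcomp : HasFDerivAt (fun z => F (matVec g.transpose z))
      (((InnerProductSpace.toDual ℝ _) (gradient F w)).comp (matVecCLM g.transpose))
      (matVec g w) := by
    have h2 : matVec g.transpose (matVec g w) = w := by
      rw [matVec_matVec, hgt, matVec_one]
    have hfd' : HasFDerivAt F ((InnerProductSpace.toDual ℝ _) (gradient F w))
        ((matVecCLM g.transpose) (matVec g w)) := by
      rw [matVecCLM_apply, h2]; exact hfd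
    have := hfd'.comp (matVec g w) ((matVecCLM g.transpose).hasFDerivAt (x := matVec g w))
    exact this
  have heq : ((InnerProductSpace.toDual ℝ _) (gradient F w)).comp (matVecCLM g.transpose)
      = (InnerProductSpace.toDual ℝ _) (matVec g (gradient F w)) := by
    ext u
    simp only [ContinuousLinearMap.comp_apply, InnerProductSpace.toDual_apply_apply, matVecCLM_apply]
    rw [matVec_adj g (gradient F w) u]
  have : HasGradientAt (fun z => F (matVec g.transpose z)) (matVec g (gradient F w))
      (matVec g w) := by
    rw [hasGradientAt_iff_hasFDerivAt, ← heq]; exact hcomp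
  exact this.gradient

/-- for `g ∈ O(n)` and a unit vector `v`,
`IG_v(gx, gx', g·F) = IG_{gᵀv}(x, x', F)`. -/
theorem IGv_orthogonal_action {n : ℕ} (F : EuclideanSpace ℝ (Fin n) → ℝ)
    (hF : ContDiff ℝ 1 F) (g : Matrix (Fin n) (Fin n) ℝ)
    (hg : g ∈ Matrix.orthogonalGroup (Fin n) ℝ)
    (v : EuclideanSpace ℝ (Fin n)) (hv : ‖v‖ = 1)
    (x x' : EuclideanSpace ℝ (Fin n)) :
    IGv (matVec g x) (matVec g x') (fun z => F (matVec g.transpose z)) v =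
      IGv x x' F (matVec g.transpose v) := by
  unfold IGv
  apply intervalIntegral.integral_congr
  intro t _
  have hsub : matVec g x - matVec g x' = matVec g (x - x') := matVec_sub g x x'
  have hpath : matVec g x' + t • matVec g (x - x') = matVec g (x' + t • (x - x')) := by
    rw [← matVecCLM_apply, ← matVecCLM_apply, ← matVecCLM_apply,
      ← (matVecCLM g).map_smul, ← map_add]
  simp only [hsub, hpath, gradient_comp F hF g hg, matVec_adj]
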